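/- Suppose the k-th submodule M_k of cont(L) contains a desingularized operator for L. If s is a nonzero element of minimal x-degree in the k-th coefficient ideal I_k, then any operator S ∈ M_k with lc_∂(S) = s and deg_∂(S) = k is a desingularized operator for L. -/

import Mathlib

open Polynomial

noncomputable section

/-- `Q_R(x)`, the field of rational functions over the fraction field `Q_R` of `R`,
realized as the fraction field of `R[x]`. -/
abbrev QX (R : Type) [CommRing R] [IsDomain R] := FractionRing (Polynomial R)

/-- Data of an Ore algebra `R[x][∂; σ, δ] ⊆ Q_R(x)[∂; σ, δ]`.
The ring `A` plays the role of `Q_R(x)[∂]`; `ι` embeds the coefficient field,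
`D` is the Ore variable `∂`, subject to the commutation rule `∂·p = σ(p)·∂ + δ(p)`,
and every element of `A` has a unique finite coefficient expansion `Σ ι(cᵢ)·∂^i`. -/
structure OreAlg (R : Type) [CommRing R] [IsDomain R] (A : Type) [Ring A] where
  σ : Polynomial R ≃+* Polynomial R
  σ_fix : ∀ r : R, σ (C r) = C r
  δ : Polynomial R → Polynomial R
  δ_add : ∀ f g, δ (f + g) = δ f + δ g
  δ_linear : ∀ (r : R) (f), δ (C r * f) = C r * δ f
  ι : QX R →+* A
  ι_inj : Function.Injective ι
  D : A
  comm_rule : ∀ p : Polynomial R,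
    D * ι (algebraMap (Polynomial R) (QX R) p)
      = ι (algebraMap (Polynomial R) (QX R) (σ p)) * D
        + ι (algebraMap (Polynomial R) (QX R) (δ p))
  δ_leibniz : ∀ f g, δ (f * g) = σ f * δ g + δ f * g
  coeff : A → ℕ → QX R
  coeff_inj : ∀ P Q : A, (∀ i, coeff P i = coeff Q i) → P = Q
  coeff_add : ∀ P Q i, coeff (P + Q) i = coeff P i + coeff Q i
  coeff_smul : ∀ (f : QX R) (P : A) (i), coeff (ι f * P) i = f * coeff P i
  coeff_bdd : ∀ P : A, ∃ N, ∀ i, N < i → coeff P i = 0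
  coeff_mk : ∀ (N : ℕ) (c : ℕ → QX R), (∀ i, N < i → c i = 0) →
    ∀ j, coeff (∑ i ∈ Finset.range (N + 1), ι (c i) * D ^ i) j = c j

namespace OreAlg

variable {R : Type} [CommRing R] [IsDomain R] {A : Type} [Ring A] (O : OreAlg R A)

/-- The embedding of `R[x]` into the Ore algebra. -/
def ιp (f : Polynomial R) : A := O.ι (algebraMap (Polynomial R) (QX R) f)

/-- The `i`-th `∂`-coefficient of `P` lies in `R[x]`. -/
def PolyCoeff (P : A) (i : ℕ) : Prop :=
  ∃ f : Polynomial R, O.coeff P i = algebraMap (Polynomial R) (QX R) f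

/-- `P` belongs to the subring `R[x][∂]` of `Q_R(x)[∂]`. -/
def InB (P : A) : Prop := ∀ i, O.PolyCoeff P i

/-- The order (degree in `∂`) of an operator. -/
def ord (P : A) : ℕ := sSup {i | O.coeff P i ≠ 0}

/-- The leading coefficient (with respect to `∂`), in `Q_R(x)`. -/
def lc (P : A) : QX R := O.coeff P (O.ord P)

/-- The contraction ideal `cont(L) = Q_R(x)[∂]·L ∩ R[x][∂]`. -/
def cont (L : A) : Set A := {P | O.InB P ∧ ∃ Q : A, P = Q * L}

/-- The `k`-th submodule `M_k(L) = {P ∈ cont(L) : deg_∂ P ≤ k}`. -/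
def M (L : A) (k : ℕ) : Set A := {P | P ∈ O.cont L ∧ O.ord P ≤ k}

/-- The `k`-th coefficient ideal `I_k = {[∂^k]P : P ∈ M_k} ∪ {0}` (as a set of
polynomials; `0` arises from `P = 0`). -/
def Icoeff (L : A) (k : ℕ) : Set (Polynomial R) :=
  {f | ∃ P ∈ O.M L k, O.coeff P k = algebraMap (Polynomial R) (QX R) f}

end OreAlg

/-- `gcd(p, w) = 1` in `R[x]`: every common divisor is a unit. -/
def Copr {R : Type} [CommRing R] (p w : Polynomial R) : Prop :=
  ∀ d : Polynomial R, d ∣ p → d ∣ w → IsUnit d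

namespace OreAlg

variable {R : Type} [CommRing R] [IsDomain R] {A : Type} [Ring A] (O : OreAlg R A)

/-- `P` is a `p`-removing operator for `L` over `R[x]`, of order `k`:
`P·L ∈ R[x][∂]` and `σ^{-k}(lc_∂(P·L)) = (w/(v·p))·lc_∂(L)` with `gcd(p, w) = 1`. -/
def IsRemoving (L : A) (p : Polynomial R) (k : ℕ) (P : A) : Prop :=
  O.ord P = k ∧ O.InB (P * L) ∧
  ∃ w v t l : Polynomial R, v ≠ 0 ∧ Copr p w ∧
    O.lc (P * L) = algebraMap (Polynomial R) (QX R) t ∧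
    O.lc L = algebraMap (Polynomial R) (QX R) l ∧
    (⇑O.σ.symm)^[k] t * (v * p) = w * l

/-- `p` is removable from `L` (at some order). -/
def Removable (L : A) (p : Polynomial R) : Prop :=
  ∃ k P, O.IsRemoving L p k P

/-- Factorization data for `lc_∂(L) = c·p₁^{e₁}⋯p_m^{e_m}`, with `c ∈ R` and the
`pᵢ ∈ R[x] \ R` irreducible and pairwise coprime; `L` has order `r > 0`. -/
def Factored (L : A) (r m : ℕ) (c : R) (p : Fin m → Polynomial R)
    (e : Fin m → ℕ) : Prop :=
  O.ord L = r ∧ 0 < r ∧ c ≠ 0 ∧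
  O.lc L = algebraMap (Polynomial R) (QX R) (C c * ∏ i, p i ^ e i) ∧
  (∀ i, Irreducible (p i) ∧ 0 < (p i).natDegree) ∧
  (∀ i j, i ≠ j → Copr (p i) (p j))

/-- `T` is a desingularized operator for `L`: `T ∈ cont(L)` and
`σ^{r-k}(lc_∂(T)) = (a/(b·∏ pᵢ^{kᵢ}))·lc_∂(L)` with `a, b ∈ R`, where each
`pᵢ^{dᵢ}` with `dᵢ > kᵢ` is non-removable from `L`. -/
def Desing (L : A) (r m : ℕ) (c : R) (p : Fin m → Polynomial R)
    (e : Fin m → ℕ) (T : A) : Prop :=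
  T ∈ O.cont L ∧ r ≤ O.ord T ∧
  ∃ (a b : R) (k : Fin m → ℕ) (t l : Polynomial R),
    b ≠ 0 ∧ (∀ i, k i ≤ e i) ∧
    O.lc T = algebraMap (Polynomial R) (QX R) t ∧
    O.lc L = algebraMap (Polynomial R) (QX R) l ∧
    (⇑O.σ.symm)^[O.ord T - r] t * (C b * ∏ i, p i ^ k i) = C a * l ∧
    (∀ i (d : ℕ), k i < d → ¬ O.Removable L (p i ^ d))

/-- The left ideal of `R[x][∂]` generated by a set `S ⊆ R[x][∂]`. -/
def LIdeal (S : Set A) : Set A :=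
  {P | ∃ (n : ℕ) (co s : Fin n → A), (∀ i, O.InB (co i)) ∧ (∀ i, s i ∈ S) ∧
    P = ∑ i, co i * s i}

/-- The constant `a ∈ R` viewed inside the Ore algebra. -/
def cst (a : R) : A := O.ιp (C a)

/-- The saturation `I : a^∞ = {P ∈ R[x][∂] : aⁱ·P ∈ I for some i}`. -/
def sat (I : Set A) (a : R) : Set A :=
  {P | O.InB P ∧ ∃ i : ℕ, O.cst a ^ i * P ∈ I}

end OreAlg


/-!
Multiplying by `∂` shifts coefficient ideals along `σ`: `σ(I_j) ⊆ I_{j+1}`. Hence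
`σ^{k - ord T}(lc T)` lies in `I_k`, and a nonzero element `s` of minimal degree in an ideal
of `R[x]` pseudo-divides every element of it. Pulling back by `σ^{-(k-r)}` and using the
desingularization identity of `T`, the normalized leading coefficient of `S` divides
`α·∏ pᵢ^{eᵢ-kᵢ}` with `α ∈ R \ {0}`. In the UFD `R[x]` such a divisor is `δ·∏ pᵢ^{fᵢ}` with
`fᵢ ≤ eᵢ - kᵢ`, which exhibits `S` as desingularized with exponents `eᵢ - fᵢ ≥ kᵢ`; the
non-removability of the higher powers is inherited from `T`.
-/

theorem Finset.prod_pow_mul_prod_pow_sub {ι M : Type*} [CommMonoid M] (s : Finset ι)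
    (p : ι → M) {f e : ι → ℕ} (h : ∀ i, f i ≤ e i) :
    (∏ i ∈ s, p i ^ f i) * ∏ i ∈ s, p i ^ (e i - f i) = ∏ i ∈ s, p i ^ e i := by
  rw [← Finset.prod_mul_distrib]
  exact Finset.prod_congr rfl fun i _ => by rw [← pow_add, Nat.add_sub_cancel' (h i)]

namespace Polynomial

variable {R : Type*} [CommRing R] [IsDomain R]

theorem exists_C_mul_eq_mul_of_natDegree_min {I : Ideal R[X]} {s : R[X]} (hs : s ∈ I)
    (hs0 : s ≠ 0) (hmin : ∀ f ∈ I, f ≠ 0 → s.natDegree ≤ f.natDegree) {g : R[X]} (hg : g ∈ I) :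
    ∃ a ≠ (0 : R), ∃ q, C a * g = q * s := by
  induction hn : g.natDegree using Nat.strong_induction_on generalizing g with
  | _ n IH =>
  by_cases hg0 : g = 0
  · exact ⟨1, one_ne_zero, 0, by simp [hg0]⟩
  have hlc : s.leadingCoeff ≠ 0 := leadingCoeff_ne_zero.2 hs0
  set q₀ := C g.leadingCoeff * X ^ (g.natDegree - s.natDegree)
  set g' := C s.leadingCoeff * g - q₀ * s
  have hg' : g' ∈ I := I.sub_mem (I.mul_mem_left _ hg) (I.mul_mem_left _ hs)
  by_cases hg'0 : g' = 0
  · exact ⟨s.leadingCoeff, hlc, q₀, sub_eq_zero.1 hg'0⟩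
  have hdeg : (C s.leadingCoeff * g).degree = (q₀ * s).degree := by
    rw [degree_C_mul hlc, degree_mul, degree_C_mul_X_pow _ (leadingCoeff_ne_zero.2 hg0),
      degree_eq_natDegree hs0, degree_eq_natDegree hg0, ← Nat.cast_add,
      Nat.sub_add_cancel (hmin g hg hg0)]
  have hlt : g'.natDegree < n := by
    rw [← hn, ← natDegree_C_mul (p := g) hlc]
    refine natDegree_lt_natDegree hg'0 (degree_sub_lt_left hdeg ?_ ?_)
    · exact mul_ne_zero (C_ne_zero.2 hlc) hg0
    · rw [leadingCoeff_mul, leadingCoeff_mul, leadingCoeff_C, leadingCoeff_C_mul_X_pow, mul_comm]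
  obtain ⟨a, ha, q, hq⟩ := IH _ hlt hg' rfl
  exact ⟨a * s.leadingCoeff, mul_ne_zero ha hlc, q + C a * q₀, by
    rw [C_mul]; linear_combination hq⟩

theorem exists_eq_C_of_dvd_C {w : R[X]} {a : R} (ha : a ≠ 0) (h : w ∣ C a) : ∃ b, w = C b :=
  ⟨w.coeff 0, eq_C_of_natDegree_eq_zero <| Nat.eq_zero_of_le_zero <|
    (natDegree_le_of_dvd h (C_ne_zero.2 ha)).trans_eq (natDegree_C a)⟩

theorem exists_eq_C_mul_prod_pow_of_dvd [UniqueFactorizationMonoid R] {ι : Type*}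
    [DecidableEq ι] {p : ι → R[X]} (hp : ∀ i, Irreducible (p i)) {a : R} (ha : a ≠ 0)
    (n : ι → ℕ) (s : Finset ι) {w : R[X]} (hw : w ∣ C a * ∏ i ∈ s, p i ^ n i) :
    ∃ (b : R) (f : ι → ℕ), (∀ i, f i ≤ n i) ∧ w = C b * ∏ i ∈ s, p i ^ f i := by
  induction s using Finset.induction_on generalizing w with
  | empty =>
    obtain ⟨b, rfl⟩ := exists_eq_C_of_dvd_C ha (by simpa using hw)
    exact ⟨b, 0, fun _ => Nat.zero_le _, by simp⟩
  | insert j s hj IH =>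
    rw [Finset.prod_insert hj, mul_left_comm] at hw
    obtain ⟨w₁, w₂, h₁, h₂, rfl⟩ := exists_dvd_and_dvd_of_dvd_mul hw
    obtain ⟨d, hd, u, hu⟩ := (dvd_prime_pow (hp j).prime _).1 h₁
    obtain ⟨v, -, hv⟩ := Polynomial.isUnit_iff.1 (u⁻¹).isUnit
    obtain ⟨b, f, hf, rfl⟩ := IH h₂
    have hw₁ : w₁ = C v * p j ^ d := by rw [hv, ← hu, mul_comm w₁, Units.inv_mul_cancel_left]
    refine ⟨v * b, Function.update f j d, fun i => ?_, ?_⟩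
    · rcases eq_or_ne i j with rfl | hij
      · simpa using hd
      · simpa [hij] using hf i
    · have hs : ∏ i ∈ s, p i ^ Function.update f j d i = ∏ i ∈ s, p i ^ f i :=
        Finset.prod_congr rfl fun i hi => by rw [Function.update_of_ne (ne_of_mem_of_not_mem hi hj)]
      rw [Finset.prod_insert hj, Function.update_self, hs, hw₁, C_mul]
      ring

end Polynomial

namespace OreAlg

variable {R : Type} [CommRing R] [IsDomain R] {A : Type} [Ring A] (O : OreAlg R A)

@[simp] theorem coeff_zero (i : ℕ) : O.coeff 0 i = 0 := by
  simpa using O.coeff_smul 0 0 i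

theorem δ_zero : O.δ 0 = 0 := by
  simpa using O.δ_add 0 0

theorem ord_le_iff {P : A} {n : ℕ} : O.ord P ≤ n ↔ ∀ i, n < i → O.coeff P i = 0 := by
  have hbdd : BddAbove {i | O.coeff P i ≠ 0} := by
    obtain ⟨N, hN⟩ := O.coeff_bdd P
    exact ⟨N, fun i hi => not_lt.1 fun h => hi (hN i h)⟩
  refine ⟨fun h i hi => not_not.1 fun h' => (le_csSup hbdd h').not_gt (h.trans_lt hi), fun h => ?_⟩
  rcases Set.eq_empty_or_nonempty {i | O.coeff P i ≠ 0} with he | hne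
  · simp [ord, he]
  · exact csSup_le hne fun i hi => not_lt.1 fun h' => hi (h i h')

theorem lc_ne_zero_of_ord_pos {P : A} (h : 0 < O.ord P) : O.lc P ≠ 0 := by
  have hne : {i | O.coeff P i ≠ 0}.Nonempty := by
    by_contra he
    simp [ord, Set.not_nonempty_iff_eq_empty.1 he] at h
  obtain ⟨N, hN⟩ := O.coeff_bdd P
  exact Nat.sSup_mem hne ⟨N, fun i hi => not_lt.1 fun h => hi (hN i h)⟩

theorem eq_zero_of_ord_lt {P : A} {g : ℕ → R[X]}
    (hg : ∀ i, O.coeff P i = algebraMap R[X] (QX R) (g i)) {i : ℕ} (hi : O.ord P < i) :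
    g i = 0 :=
  IsFractionRing.injective R[X] (QX R) <| by
    rw [← hg, O.ord_le_iff.1 le_rfl i hi, map_zero]

theorem zero_mem_M (L : A) (k : ℕ) : (0 : A) ∈ O.M L k :=
  ⟨⟨fun _ => ⟨0, by simp⟩, 0, (zero_mul L).symm⟩, O.ord_le_iff.2 fun i _ => O.coeff_zero i⟩

theorem add_mem_M {L P Q : A} {k : ℕ} (hP : P ∈ O.M L k) (hQ : Q ∈ O.M L k) :
    P + Q ∈ O.M L k := by
  obtain ⟨⟨hPB, P', rfl⟩, hPk⟩ := hP
  obtain ⟨⟨hQB, Q', rfl⟩, hQk⟩ := hQ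
  refine ⟨⟨fun i => ?_, P' + Q', (add_mul _ _ _).symm⟩, O.ord_le_iff.2 fun i hi => ?_⟩
  · obtain ⟨f, hf⟩ := hPB i
    obtain ⟨g, hg⟩ := hQB i
    exact ⟨f + g, by rw [O.coeff_add, hf, hg, map_add]⟩
  · rw [O.coeff_add, O.ord_le_iff.1 hPk i hi, O.ord_le_iff.1 hQk i hi, add_zero]

theorem ιp_mul_mem_M {L P : A} {k : ℕ} (f : R[X]) (hP : P ∈ O.M L k) :
    O.ιp f * P ∈ O.M L k := by
  obtain ⟨⟨hPB, P', rfl⟩, hPk⟩ := hP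
  refine ⟨⟨fun i => ?_, O.ιp f * P', (mul_assoc _ _ _).symm⟩, O.ord_le_iff.2 fun i hi => ?_⟩
  · obtain ⟨g, hg⟩ := hPB i
    exact ⟨f * g, by rw [ιp, O.coeff_smul, hg, map_mul]⟩
  · rw [ιp, O.coeff_smul, O.ord_le_iff.1 hPk i hi, mul_zero]

def coeffIdeal (L : A) (k : ℕ) : Ideal R[X] where
  carrier := O.Icoeff L k
  zero_mem' := ⟨0, O.zero_mem_M L k, by simp⟩
  add_mem' := fun ⟨P, hP, hPf⟩ ⟨Q, hQ, hQg⟩ =>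
    ⟨P + Q, O.add_mem_M hP hQ, by rw [O.coeff_add, hPf, hQg, map_add]⟩
  smul_mem' := fun f _ ⟨P, hP, hPg⟩ =>
    ⟨O.ιp f * P, O.ιp_mul_mem_M f hP, by rw [ιp, O.coeff_smul, hPg, smul_eq_mul, map_mul]⟩

/-- The `∂`-coefficients of `∂·P` in terms of those `g` of `P`, read off from
`∂·g ∂^i = σ(g) ∂^(i+1) + δ(g) ∂^i`. -/
def coeffDMul (g : ℕ → R[X]) : ℕ → R[X]
  | 0 => O.δ (g 0)
  | j + 1 => O.σ (g j) + O.δ (g (j + 1))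

theorem coeff_D_mul {P : A} {g : ℕ → R[X]}
    (hg : ∀ i, O.coeff P i = algebraMap R[X] (QX R) (g i)) (j : ℕ) :
    O.coeff (O.D * P) j = algebraMap R[X] (QX R) (O.coeffDMul g j) := by
  obtain ⟨N, hN⟩ := O.coeff_bdd P
  have hgN : ∀ i, N < i → g i = 0 := fun i hi =>
    IsFractionRing.injective R[X] (QX R) (by rw [← hg, hN i hi, map_zero])
  have hP : P = ∑ i ∈ Finset.range (N + 2), O.ι (algebraMap R[X] (QX R) (g i)) * O.D ^ i :=
    O.coeff_inj _ _ fun i => by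
      rw [O.coeff_mk (N + 1) _ (fun i hi => by rw [hgN i (by omega), map_zero]), hg]
  have hD : O.D * P = ∑ j ∈ Finset.range (N + 2),
      O.ι (algebraMap R[X] (QX R) (O.coeffDMul g j)) * O.D ^ j := by
    rw [hP, Finset.mul_sum]
    simp_rw [← mul_assoc, O.comm_rule, add_mul, mul_assoc, ← pow_succ', Finset.sum_add_distrib]
    conv_rhs => rw [Finset.sum_range_succ']
    rw [Finset.sum_range_succ (fun i => O.ι (algebraMap R[X] (QX R) (O.σ (g i))) * O.D ^ (i + 1)),
      Finset.sum_range_succ' (fun i => O.ι (algebraMap R[X] (QX R) (O.δ (g i))) * O.D ^ i)]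
    simp only [coeffDMul, map_add, add_mul, Finset.sum_add_distrib, hgN (N + 1) (by omega),
      map_zero, zero_mul, add_zero]
    abel
  rw [hD, O.coeff_mk (N + 1) _ (fun j hj => ?_) j]
  obtain ⟨j, rfl⟩ : ∃ i, j = i + 1 := ⟨j - 1, by omega⟩
  simp [coeffDMul, hgN j (by omega), hgN (j + 1) (by omega), O.δ_zero]

theorem inB_D_mul {P : A} (hP : O.InB P) : O.InB (O.D * P) := by
  choose g hg using hP
  exact fun j => ⟨_, O.coeff_D_mul hg j⟩

theorem ord_D_mul_le {P : A} {n : ℕ} (hP : O.InB P) (h : O.ord P ≤ n) :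
    O.ord (O.D * P) ≤ n + 1 := by
  choose g hg using hP
  refine O.ord_le_iff.2 fun j hj => ?_
  obtain ⟨j, rfl⟩ : ∃ i, j = i + 1 := ⟨j - 1, by omega⟩
  simp [O.coeff_D_mul hg, coeffDMul, O.eq_zero_of_ord_lt hg (show O.ord P < j by omega),
    O.eq_zero_of_ord_lt hg (show O.ord P < j + 1 by omega), O.δ_zero]

theorem coeff_D_mul_succ {P : A} {n : ℕ} {f : R[X]} (hP : O.InB P) (h : O.ord P ≤ n)
    (hn : O.coeff P n = algebraMap R[X] (QX R) f) :
    O.coeff (O.D * P) (n + 1) = algebraMap R[X] (QX R) (O.σ f) := by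
  choose g hg using hP
  obtain rfl : g n = f := IsFractionRing.injective R[X] (QX R) ((hg n).symm.trans hn)
  rw [O.coeff_D_mul hg, coeffDMul, O.eq_zero_of_ord_lt hg (Nat.lt_succ_of_le h), O.δ_zero,
    add_zero]

theorem D_pow_mul_mem_M {L P : A} {n : ℕ} (hP : P ∈ O.M L n) (j : ℕ) :
    O.D ^ j * P ∈ O.M L (n + j) := by
  induction j with
  | zero => simpa using hP
  | succ j ih =>
    obtain ⟨⟨hB, Q, hQ⟩, hord⟩ := ih
    rw [pow_succ', mul_assoc]
    exact ⟨⟨O.inB_D_mul hB, O.D * Q, by rw [hQ, mul_assoc]⟩, O.ord_D_mul_le hB hord⟩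

theorem coeff_D_pow_mul {L P : A} {n : ℕ} {f : R[X]} (hP : P ∈ O.M L n)
    (hn : O.coeff P n = algebraMap R[X] (QX R) f) (j : ℕ) :
    O.coeff (O.D ^ j * P) (n + j) = algebraMap R[X] (QX R) ((⇑O.σ)^[j] f) := by
  induction j with
  | zero => simpa using hn
  | succ j ih =>
    obtain ⟨⟨hB, -⟩, hord⟩ := O.D_pow_mul_mem_M hP j
    rw [pow_succ', mul_assoc, ← add_assoc, Function.iterate_succ_apply']
    exact O.coeff_D_mul_succ hB hord ih

theorem iterate_σ_mem_Icoeff {L : A} {n : ℕ} {f : R[X]} (hf : f ∈ O.Icoeff L n) (j : ℕ) :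
    (⇑O.σ)^[j] f ∈ O.Icoeff L (n + j) :=
  let ⟨_, hP, hPf⟩ := hf
  ⟨_, O.D_pow_mul_mem_M hP j, O.coeff_D_pow_mul hP hPf j⟩

theorem iterate_σ_symm_C (n : ℕ) (a : R) : (⇑O.σ.symm)^[n] (C a) = C a :=
  Function.iterate_fixed (O.σ.symm_apply_eq.2 (O.σ_fix a).symm) n

theorem iterate_σ_symm_iterate_σ_of_le {i j n : ℕ} (hij : i ≤ j) (f : R[X]) :
    (⇑O.σ.symm)^[n + j - i] ((⇑O.σ)^[j - i] f) = (⇑O.σ.symm)^[n] f := by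
  rw [Nat.add_sub_assoc hij, Function.iterate_add_apply,
    Function.LeftInverse.iterate (fun x => O.σ.symm_apply_apply x) _ f]

theorem desing_of_dvd_prod {L S : A} {r m : ℕ} {c : R} {p : Fin m → R[X]} {e : Fin m → ℕ}
    [UniqueFactorizationMonoid R] (hF : O.Factored L r m c p e) (hS : S ∈ O.cont L)
    (hrS : r ≤ O.ord S) {s : R[X]} (hSlc : O.lc S = algebraMap R[X] (QX R) s)
    {k : Fin m → ℕ} (hk : ∀ i, k i ≤ e i) (hrem : ∀ i d, k i < d → ¬ O.Removable L (p i ^ d))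
    {α : R} (hα : α ≠ 0) (hdvd : (⇑O.σ.symm)^[O.ord S - r] s ∣ C α * ∏ i, p i ^ (e i - k i)) :
    O.Desing L r m c p e S := by
  classical
  obtain ⟨-, -, hc, hLlc, hp, -⟩ := hF
  obtain ⟨b, f, hf, hs⟩ :=
    exists_eq_C_mul_prod_pow_of_dvd (fun i => (hp i).1) hα _ Finset.univ hdvd
  have hfe : ∀ i, f i ≤ e i := fun i => (hf i).trans (Nat.sub_le _ _)
  have hkf : ∀ i, k i ≤ e i - f i := fun i => by have := hf i; have := hk i; omega
  refine ⟨hS, hrS, b, c, fun i => e i - f i, s, _, hc, fun i => Nat.sub_le _ _, hSlc, hLlc, ?_,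
    fun i d hd => hrem i d ((hkf i).trans_lt hd)⟩
  rw [hs, ← Finset.prod_pow_mul_prod_pow_sub _ p hfe]
  ring

theorem desing_of_dvd_desing {L T S : A} {r m : ℕ} {c : R} {p : Fin m → R[X]} {e : Fin m → ℕ}
    [UniqueFactorizationMonoid R] (hF : O.Factored L r m c p e) (hT : O.Desing L r m c p e T)
    {t : R[X]} (hTlc : O.lc T = algebraMap R[X] (QX R) t) (hS : S ∈ O.cont L)
    (hrS : r ≤ O.ord S) {s : R[X]} (hSlc : O.lc S = algebraMap R[X] (QX R) s)
    {a : R} (ha : a ≠ 0)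
    (hdvd : (⇑O.σ.symm)^[O.ord S - r] s ∣ C a * (⇑O.σ.symm)^[O.ord T - r] t) :
    O.Desing L r m c p e S := by
  obtain ⟨-, hrT, a', b, k, t', l, hb, hk, hTlc', hLlc, hTeq, hrem⟩ := hT
  obtain rfl : t = t' := IsFractionRing.injective R[X] (QX R) (hTlc.symm.trans hTlc')
  obtain ⟨-, hr, hc, hLlc', hirr, -⟩ := id hF
  obtain rfl : l = C c * ∏ i, p i ^ e i :=
    IsFractionRing.injective R[X] (QX R) (hLlc.symm.trans hLlc')
  have hp : ∏ i, p i ^ k i ≠ 0 :=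
    Finset.prod_ne_zero_iff.2 fun i _ => pow_ne_zero _ (hirr i).1.ne_zero
  have ht : (⇑O.σ.symm)^[O.ord T - r] t ≠ 0 := by
    refine fun h => O.lc_ne_zero_of_ord_pos (hr.trans_le hrT) ?_
    rw [hTlc, (O.σ.symm.injective.iterate _) (h.trans (iterate_map_zero _ _).symm), map_zero]
  have ha' : a' ≠ 0 := by
    rintro rfl
    simp [ht, hb, hp] at hTeq
  refine O.desing_of_dvd_prod hF hS hrS hSlc hk hrem (mul_ne_zero (mul_ne_zero ha ha') hc)
    (hdvd.trans ⟨C b, mul_right_cancel₀ hp ?_⟩)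
  rw [← Finset.prod_pow_mul_prod_pow_sub _ p hk] at hTeq
  rw [C_mul, C_mul]
  linear_combination -(C a) * hTeq

end OreAlg

theorem min_coeff_gives_desing_general {R : Type} [CommRing R] [IsDomain R]
    [IsPrincipalIdealRing R] {A : Type} [Ring A] (O : OreAlg R A)
    (L : A)
    (r m : ℕ) (c : R) (p : Fin m → Polynomial R) (e : Fin m → ℕ)
    (hF : O.Factored L r m c p e)
    (k : ℕ) (T : A) (hT : O.Desing L r m c p e T) (hTk : T ∈ O.M L k)
    (s : Polynomial R) (hs : s ∈ O.Icoeff L k) (hs0 : s ≠ 0)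
    (hmin : ∀ f ∈ O.Icoeff L k, f ≠ 0 → s.natDegree ≤ f.natDegree)
    (S : A) (hS : S ∈ O.M L k) (hSord : O.ord S = k)
    (hSlc : O.lc S = algebraMap (Polynomial R) (QX R) s) :
    O.Desing L r m c p e S := by
  obtain ⟨t, hTlc⟩ : ∃ t, O.lc T = algebraMap R[X] (QX R) t :=
    let ⟨_, _, _, _, _, t, _, _, _, h, _⟩ := hT; ⟨t, h⟩
  have hkT : O.ord T ≤ k := hTk.2
  have hrT : r ≤ O.ord T := hT.2.1
  have hu : (⇑O.σ)^[k - O.ord T] t ∈ O.Icoeff L k := by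
    simpa [Nat.add_sub_cancel' hkT] using
      O.iterate_σ_mem_Icoeff ⟨T, ⟨hT.1, le_rfl⟩, hTlc⟩ (k - O.ord T)
  obtain ⟨a, ha, q, hq⟩ :=
    Polynomial.exists_C_mul_eq_mul_of_natDegree_min (I := O.coeffIdeal L k) hs hs0 hmin hu
  refine O.desing_of_dvd_desing hF hT hTlc hS.1 (hSord ▸ hrT.trans hkT) hSlc ha
    ⟨(⇑O.σ.symm)^[k - r] q, ?_⟩
  have hq' := congrArg (⇑O.σ.symm)^[O.ord T - r + k - O.ord T] hq
  rw [iterate_map_mul, iterate_map_mul, O.iterate_σ_symm_C,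
    O.iterate_σ_symm_iterate_σ_of_le hkT, show O.ord T - r + k - O.ord T = k - r by omega] at hq'
  rw [hq', hSord, mul_comm]

/-- if `M_k` contains a desingularized operator for `L` and `s` is
a nonzero element of minimal `x`-degree in `I_k`, then any `S ∈ M_k` of order `k`
with `lc_∂(S) = s` is a desingularized operator for `L`. -/
theorem min_coeff_gives_desing {R : Type} [CommRing R] [IsDomain R]
    [IsPrincipalIdealRing R] {A : Type} [Ring A] (O : OreAlg R A)
    (L : A) (hL : L ≠ 0) (hLB : O.InB L)
    (r m : ℕ) (c : R) (p : Fin m → Polynomial R) (e : Fin m → ℕ)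
    (hF : O.Factored L r m c p e)
    (k : ℕ) (T : A) (hT : O.Desing L r m c p e T) (hTk : T ∈ O.M L k)
    (s : Polynomial R) (hs : s ∈ O.Icoeff L k) (hs0 : s ≠ 0)
    (hmin : ∀ f ∈ O.Icoeff L k, f ≠ 0 → s.natDegree ≤ f.natDegree)
    (S : A) (hS : S ∈ O.M L k) (hSord : O.ord S = k)
    (hSlc : O.lc S = algebraMap (Polynomial R) (QX R) s) :
    O.Desing L r m c p e S :=
  min_coeff_gives_desing_general O L r m c p e hF k T hT hTk s hs hs0 hmin S hS hSord hSlc
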